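/- arXiv:2010.06063 — 2 statements merged into one kernel-verified Lean document; each statement's English description precedes it below -/
import Mathlib

section
/- For any real c and positive reals a and b, ∫₀^∞ ∫₀^{τ₂} (c/τ₂) exp(-b τ₁) exp(-a τ₂) dτ₁ dτ₂ = (c/b) · log((a+b)/a). -/
/-! Integrating out `τ₁` leaves `(c / b) ∫₀^∞ (e^{-a τ} - e^{-(a+b) τ}) / τ dτ`, which is
Frullani's integral for `f = exp ∘ neg` and equals `(c / b) log ((a + b) / a)`. -/

open MeasureTheory Real Set Filter Topology

lemma integral_Ioo_exp_neg_mul {k T : ℝ} (hk : k ≠ 0) (hT : 0 ≤ T) :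
    ∫ t in Ioo 0 T, exp (-k * t) = (1 - exp (-k * T)) / k := by
  rw [← integral_Ioc_eq_integral_Ioo, ← intervalIntegral.integral_of_le hT,
    intervalIntegral.integral_comp_mul_left exp (neg_ne_zero.2 hk), integral_exp]
  simp only [mul_zero, exp_zero, smul_eq_mul]
  field_simp
  ring

lemma integrableOn_Ioi_inv_mul_exp_neg_sub_of_le {a b : ℝ} (ha : 0 < a) (hab : a ≤ b) :
    IntegrableOn (fun x ↦ x⁻¹ * (exp (-(a * x)) - exp (-(b * x)))) (Ioi 0) := by
  have hdom : IntegrableOn (fun x ↦ (b - a) * exp (-a * x)) (Ioi 0) :=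
    (exp_neg_integrableOn_Ioi 0 ha).const_mul _
  refine hdom.mono' (by fun_prop) ?_
  filter_upwards [ae_restrict_mem measurableSet_Ioi] with x (hx : 0 < x)
  have hgap : 1 - exp (-((b - a) * x)) ≤ (b - a) * x := by
    linarith [add_one_le_exp (-((b - a) * x))]
  have hsplit : exp (-(a * x)) - exp (-(b * x)) = exp (-a * x) * (1 - exp (-((b - a) * x))) := by
    rw [mul_sub, mul_one, ← exp_add]
    ring_nf
  have hnonneg : 0 ≤ 1 - exp (-((b - a) * x)) := by
    rw [sub_nonneg, exp_le_one_iff]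
    nlinarith
  rw [hsplit, norm_of_nonneg (by positivity), inv_mul_le_iff₀ hx]
  calc exp (-a * x) * (1 - exp (-((b - a) * x)))
      ≤ exp (-a * x) * ((b - a) * x) := by gcongr
    _ = x * ((b - a) * exp (-a * x)) := by ring

lemma integrableOn_Ioi_inv_mul_exp_neg_sub {a b : ℝ} (ha : 0 < a) (hb : 0 < b) :
    IntegrableOn (fun x ↦ x⁻¹ * (exp (-(a * x)) - exp (-(b * x)))) (Ioi 0) := by
  rcases le_total a b with hab | hba
  · exact integrableOn_Ioi_inv_mul_exp_neg_sub_of_le ha hab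
  · convert (integrableOn_Ioi_inv_mul_exp_neg_sub_of_le hb hba).neg using 1
    ext x
    simp only [Pi.neg_apply]
    ring

theorem integral_Ioi_inv_mul_exp_neg_sub {a b : ℝ} (ha : 0 < a) (hb : 0 < b) :
    ∫ x in Ioi 0, x⁻¹ * (exp (-(a * x)) - exp (-(b * x))) = log (b / a) := by
  have hf : Continuous fun x : ℝ ↦ exp (-x) := by fun_prop
  have hL : Tendsto (fun x : ℝ ↦ exp (-x)) (𝓝[>] 0) (𝓝 1) := by
    simpa using (hf.tendsto 0).mono_left nhdsWithin_le_nhds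
  have h := Frullani.integral_Ioi_eq (f := fun x ↦ exp (-x))
    (hf.continuousOn.locallyIntegrableOn measurableSet_Ioi)
    ha hb hL tendsto_exp_neg_atTop_nhds_zero
    (by simpa only [smul_eq_mul] using integrableOn_Ioi_inv_mul_exp_neg_sub ha hb)
  simpa only [smul_eq_mul, sub_zero, mul_one] using h

theorem stmt_3 (c a b : ℝ) (ha : 0 < a) (hb : 0 < b) :
    ∫ τ₂ in Set.Ioi (0:ℝ), ∫ τ₁ in Set.Ioo 0 τ₂,
      (c / τ₂) * Real.exp (-b * τ₁) * Real.exp (-a * τ₂)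
      = (c / b) * Real.log ((a + b) / a) := by
  have hinner : ∀ x ∈ Ioi (0:ℝ),
      ∫ t in Ioo 0 x, (c / x) * exp (-b * t) * exp (-a * x)
        = (c / b) * (x⁻¹ * (exp (-(a * x)) - exp (-((a + b) * x)))) := by
    intro x (hx : 0 < x)
    simp_rw [mul_right_comm _ (exp (-b * _))]
    rw [integral_const_mul, integral_Ioo_exp_neg_mul hb.ne' hx.le,
      show -((a + b) * x) = -a * x + -b * x by ring, exp_add]
    field_simp
  rw [setIntegral_congr_fun measurableSet_Ioi hinner, integral_const_mul,
    integral_Ioi_inv_mul_exp_neg_sub ha (by positivity)]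
end

section
/- For any real c and positive reals b, f, ∫₀^∞ ∫₀^{τ₃} ∫₀^{τ₂} (c/τ₃²) exp(-b τ₂) exp(-f τ₃) dτ₁ dτ₂ dτ₃ = c/b + (c f / b²)(log f − log(b+f)). -/
/-!
For fixed `τ₃` the two inner integrals are elementary and give
`c e^{-f τ₃} (1 - e^{-b τ₃} (1 + b τ₃)) / (b τ₃)²`. Since
`a² ∫₀^T x e^{-a x} dx = 1 - e^{-a T} (1 + a T)` is symmetric in `a` and `T`, this is
`(c / b²) ∫₀^b s e^{-(f + s) τ₃} ds`. Exchanging the order of integration, the `τ₃`-integral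
becomes `s / (f + s)`, whose integral over `(0, b)` is `b + f (log f - log (f + b))`.
-/

open MeasureTheory Set Real

theorem sq_mul_integral_mul_exp_neg_mul (a T : ℝ) :
    a ^ 2 * ∫ x in (0:ℝ)..T, x * exp (-a * x) = 1 - exp (-a * T) * (1 + a * T) := by
  rcases eq_or_ne a 0 with rfl | ha
  · simp
  have hderiv : ∀ x, HasDerivAt (fun y => -exp (-a * y) * (1 + a * y) / a ^ 2)
      (x * exp (-a * x)) x := by
    intro x
    have h := (((hasDerivAt_id x).const_mul (-a)).exp.neg.mul
      (((hasDerivAt_id x).const_mul a).const_add 1)).div_const (a ^ 2)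
    refine h.congr_deriv ?_
    simp only [id, Pi.neg_apply]
    field_simp
    ring
  rw [intervalIntegral.integral_eq_sub_of_hasDerivAt (fun x _ => hderiv x)
    (by apply Continuous.intervalIntegrable; fun_prop)]
  field_simp
  simp
  ring

theorem sq_mul_integral_mul_exp_neg_mul_comm (a T : ℝ) :
    a ^ 2 * ∫ x in (0:ℝ)..T, x * exp (-a * x)
      = T ^ 2 * ∫ x in (0:ℝ)..a, x * exp (-T * x) := by
  rw [sq_mul_integral_mul_exp_neg_mul, sq_mul_integral_mul_exp_neg_mul, neg_mul, neg_mul,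
    mul_comm T a]

theorem integral_div_add_self {f b : ℝ} (hf : 0 < f) (hb : 0 ≤ b) :
    ∫ s in (0:ℝ)..b, s / (f + s) = b + f * (log f - log (f + b)) := by
  have hpos : ∀ s ∈ uIcc 0 b, 0 < f + s := fun s hs => by
    rw [uIcc_of_le hb] at hs; linarith [hs.1]
  have hderiv : ∀ s ∈ uIcc 0 b, HasDerivAt (fun s => s - f * log (f + s)) (s / (f + s)) s := by
    intro s hs
    have h := (hasDerivAt_id s).sub
      ((((hasDerivAt_id s).const_add f).log (hpos s hs).ne').const_mul f)
    refine h.congr_deriv ?_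
    simp only [id]
    field_simp [(hpos s hs).ne']
    ring
  have hint : IntervalIntegrable (fun s => s / (f + s)) volume 0 b :=
    (continuousOn_id.div (by fun_prop) fun s hs => (hpos s hs).ne').intervalIntegrable
  rw [intervalIntegral.integral_eq_sub_of_hasDerivAt hderiv hint]
  simp
  ring

theorem integral_Ioi_mul_exp_neg_add_mul {f s : ℝ} (hfs : 0 < f + s) :
    ∫ τ in Ioi (0:ℝ), s * exp (-(f + s) * τ) = s / (f + s) := by
  rw [integral_const_mul, integral_exp_mul_Ioi (neg_lt_zero.2 hfs)]
  have : -(f + s) ≠ 0 := by linarith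
  field_simp
  simp

theorem integrable_mul_exp_neg_add_mul_prod {f : ℝ} (hf : 0 < f) (b : ℝ) :
    Integrable (Function.uncurry fun τ s : ℝ => s * exp (-(f + s) * τ))
      ((volume.restrict (Ioi 0)).prod (volume.restrict (Ioc 0 b))) := by
  have hcont₂ : Continuous fun p : ℝ × ℝ => p.2 * exp (-(f + p.2) * p.1) := by fun_prop
  have hmeas : AEStronglyMeasurable (Function.uncurry fun τ s : ℝ => s * exp (-(f + s) * τ))
      ((volume.restrict (Ioi 0)).prod (volume.restrict (Ioc 0 b))) :=
    hcont₂.aestronglyMeasurable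
  have hcont : ContinuousOn (fun s => s / (f + s)) (Icc 0 b) :=
    continuousOn_id.div (by fun_prop) fun s hs => by linarith [hs.1]
  refine (integrable_prod_iff' hmeas).2 ⟨?_, ?_⟩
  · filter_upwards [ae_restrict_mem measurableSet_Ioc] with s hs
    exact (integrableOn_exp_mul_Ioi (a := -(f + s)) (by linarith [hs.1]) 0).const_mul s
  · refine (hcont.integrableOn_Icc.mono_set Ioc_subset_Icc_self).congr ?_
    filter_upwards [ae_restrict_mem measurableSet_Ioc] with s hs
    rw [← integral_Ioi_mul_exp_neg_add_mul (by linarith [hs.1] : 0 < f + s)]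
    refine setIntegral_congr_fun measurableSet_Ioi fun τ _ => ?_
    exact (norm_of_nonneg (mul_nonneg hs.1.le (exp_pos _).le)).symm

theorem integral_Ioi_integral_mul_exp_neg_add_mul {f b : ℝ} (hf : 0 < f) (hb : 0 ≤ b) :
    ∫ τ in Ioi (0:ℝ), ∫ s in (0:ℝ)..b, s * exp (-(f + s) * τ)
      = b + f * (log f - log (f + b)) := by
  simp_rw [intervalIntegral.integral_of_le hb]
  rw [integral_integral_swap (integrable_mul_exp_neg_add_mul_prod hf b),
    ← integral_div_add_self hf hb, intervalIntegral.integral_of_le hb]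
  exact setIntegral_congr_fun measurableSet_Ioc fun s hs =>
    integral_Ioi_mul_exp_neg_add_mul (by linarith [hs.1])

theorem integral_Ioo_integral_Ioo_const_mul_exp {b τ₃ : ℝ} (hb : b ≠ 0) (hτ₃ : 0 < τ₃)
    (c f : ℝ) :
    (∫ τ₂ in Ioo 0 τ₃, ∫ _τ₁ in Ioo 0 τ₂, (c / τ₃ ^ 2) * exp (-b * τ₂) * exp (-f * τ₃))
      = c / b ^ 2 * ∫ s in (0:ℝ)..b, s * exp (-(f + s) * τ₃) := by
  have hτ₁ : ∀ τ₂ ∈ Ioo 0 τ₃,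
      (∫ _τ₁ in Ioo 0 τ₂, (c / τ₃ ^ 2) * exp (-b * τ₂) * exp (-f * τ₃))
        = c / τ₃ ^ 2 * exp (-f * τ₃) * (τ₂ * exp (-b * τ₂)) := fun τ₂ hτ₂ => by
    rw [setIntegral_const, Real.volume_real_Ioo_of_le hτ₂.1.le, smul_eq_mul, sub_zero]
    ring
  have hpull : ∫ s in (0:ℝ)..b, s * exp (-(f + s) * τ₃)
      = exp (-f * τ₃) * ∫ s in (0:ℝ)..b, s * exp (-τ₃ * s) := by
    rw [← intervalIntegral.integral_const_mul]
    congr 1 with s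
    rw [mul_left_comm, ← exp_add]
    ring_nf
  rw [setIntegral_congr_fun measurableSet_Ioo hτ₁, integral_const_mul,
    ← integral_Ioc_eq_integral_Ioo, ← intervalIntegral.integral_of_le hτ₃.le, hpull]
  have hsym := sq_mul_integral_mul_exp_neg_mul_comm b τ₃
  -- keeps `field_simp` from rewriting the integrands, which would break `hsym`
  generalize (∫ x in (0:ℝ)..τ₃, x * exp (-b * x)) = I at hsym ⊢
  generalize (∫ x in (0:ℝ)..b, x * exp (-τ₃ * x)) = J at hsym ⊢
  field_simp
  linear_combination c * hsym

theorem stmt_7 (c b f : ℝ) (hb : 0 < b) (hf : 0 < f) :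
    ∫ τ₃ in Set.Ioi (0:ℝ), ∫ τ₂ in Set.Ioo 0 τ₃, ∫ _τ₁ in Set.Ioo 0 τ₂,
      (c / τ₃^2) * Real.exp (-b * τ₂) * Real.exp (-f * τ₃)
      = c / b + (c * f / b^2) * (Real.log f - Real.log (b + f)) := by
  rw [setIntegral_congr_fun measurableSet_Ioi
      fun τ₃ hτ₃ => integral_Ioo_integral_Ioo_const_mul_exp hb.ne' hτ₃ c f,
    integral_const_mul, integral_Ioi_integral_mul_exp_neg_add_mul hf hb.le, add_comm f b]
  field_simp
end
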